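/- Suppose x : [0,∞) → ℝ^{2m} and h : [0,∞) → ℝ^{2m} are differentiable with ẋ(t) = h(t) − K_f x(t) and ḣ(t) = −K_h h(t), where K_f, K_h are positive definite symmetric matrices such that the block matrix [[−K_f, (1/2)I],[(1/2)I, −K_h]] is negative definite. Then V(t) = (1/2)‖x(t)‖² + (1/2)‖h(t)‖² is strictly decreasing whenever (x(t),h(t)) ≠ (0,0), and x(t), h(t) → 0 as t → ∞. -/

import Mathlib

/-!
Stacking `z = (x, h)`, the derivative of `V = ½ z ⬝ᵥ z` along the flow is
`x ⬝ᵥ (h - K_f x) - h ⬝ᵥ K_h h = -(z ⬝ᵥ M z)` with `M = -[[-K_f, ½ I], [½ I, -K_h]]`: the cross term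
`x ⬝ᵥ h` is split evenly between the two off-diagonal blocks. Positive definiteness of `M` gives
`V' < 0` away from the origin, and, since a positive definite form is bounded below by `c ‖z‖²` on
a finite-dimensional space, `V' ≤ -2c V`; hence `V(t) ≤ V(0) e^{-2ct}` and `z → 0`.
-/

open Matrix Filter Topology

theorem Matrix.PosDef.exists_pos_mul_dotProduct_self_le {n : Type*} [Fintype n]
    {M : Matrix n n ℝ} (hM : M.PosDef) :
    ∃ c > 0, ∀ z : n → ℝ, c * (z ⬝ᵥ z) ≤ z ⬝ᵥ M *ᵥ z := by
  -- `q` is positive on the compact unit sphere, so bounded below there by some `c > 0`;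
  -- homogeneity of degree 2 transports the bound to all of `n → ℝ`.
  let q : EuclideanSpace ℝ n → ℝ := fun v => v.ofLp ⬝ᵥ M *ᵥ v.ofLp
  have hq : Continuous q := by
    have : Continuous fun v : EuclideanSpace ℝ n => v.ofLp := PiLp.continuous_ofLp 2 _
    exact this.dotProduct (continuous_const.matrix_mulVec this)
  obtain ⟨c, hc, hcq⟩ := (isCompact_sphere (0 : EuclideanSpace ℝ n) 1).exists_forall_le'
    hq.continuousOn fun v hv => hM.dotProduct_mulVec_pos fun hv0 => by simp_all
  refine ⟨c, hc, fun z => ?_⟩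
  rcases eq_or_ne z 0 with rfl | hz
  · simp
  set v := WithLp.toLp 2 z
  have hv : 0 < ‖v‖ := by simpa [v] using hz
  have hzz : z ⬝ᵥ z = ‖v‖ ^ 2 := by
    rw [EuclideanSpace.real_norm_sq_eq]
    simp [v, dotProduct, sq]
  have key := hcq (‖v‖⁻¹ • v) (by simp [norm_smul, hv.ne'])
  simp only [q, WithLp.ofLp_smul, mulVec_smul, dotProduct_smul, smul_dotProduct, smul_eq_mul] at key
  rw [hzz]
  calc c * ‖v‖ ^ 2 ≤ ‖v‖⁻¹ * (‖v‖⁻¹ * (z ⬝ᵥ M *ᵥ z)) * ‖v‖ ^ 2 := by gcongr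
    _ = z ⬝ᵥ M *ᵥ z := by field_simp

theorem le_mul_exp_of_hasDerivAt_le_mul {f f' : ℝ → ℝ} {k : ℝ}
    (hf : ∀ t, HasDerivAt f (f' t) t) (hf' : ∀ t, f' t ≤ k * f t) {t : ℝ} (ht : 0 ≤ t) :
    f t ≤ f 0 * Real.exp (k * t) := by
  have hanti : Antitone fun s => f s * Real.exp (-(k * s)) := by
    refine antitone_of_hasDerivAt_nonpos
      (fun s => (hf s).mul (((hasDerivAt_id s).const_mul k).neg.exp)) fun s => ?_
    simp only [Pi.zero_apply, Pi.neg_apply, id, mul_one]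
    have hsplit : f' s * Real.exp (-(k * s)) + f s * (Real.exp (-(k * s)) * -k) =
        (f' s - k * f s) * Real.exp (-(k * s)) := by ring
    rw [hsplit]
    exact mul_nonpos_of_nonpos_of_nonneg (sub_nonpos.2 (hf' s)) (Real.exp_pos _).le
  have := hanti ht
  simp only [mul_zero, neg_zero, Real.exp_zero, mul_one] at this
  calc f t = f t * Real.exp (-(k * t)) * Real.exp (k * t) := by
        rw [mul_assoc, ← Real.exp_add, neg_add_cancel, Real.exp_zero, mul_one]
    _ ≤ f 0 * Real.exp (k * t) := by gcongr

theorem tendsto_zero_of_hasDerivAt_le_neg_mul {f f' : ℝ → ℝ} {k : ℝ} (hk : 0 < k)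
    (hf : ∀ t, HasDerivAt f (f' t) t) (hf' : ∀ t, f' t ≤ -k * f t) (hf0 : ∀ t, 0 ≤ f t) :
    Tendsto f atTop (𝓝 0) := by
  have hexp : Tendsto (fun t => f 0 * Real.exp (-k * t)) atTop (𝓝 0) := by
    simpa using (Real.tendsto_exp_atBot.comp
      (tendsto_id.const_mul_atTop_of_neg (neg_neg_of_pos hk))).const_mul (f 0)
  exact tendsto_of_tendsto_of_tendsto_of_le_of_le' tendsto_const_nhds hexp
    (Eventually.of_forall hf0)
    (eventually_atTop.2 ⟨0, fun _ => le_mul_exp_of_hasDerivAt_le_mul hf hf'⟩)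

section Lyapunov

variable {ι : Type*} [Fintype ι]

theorem HasDerivAt.half_dotProduct_self {z : ℝ → ι → ℝ} {z' : ι → ℝ} {t : ℝ}
    (hz : HasDerivAt z z' t) :
    HasDerivAt (fun s => (1 / 2 : ℝ) * (z s ⬝ᵥ z s)) (z t ⬝ᵥ z') t := by
  have hsum : HasDerivAt (fun s => z s ⬝ᵥ z s) (∑ i, (z' i * z t i + z t i * z' i)) t :=
    HasDerivAt.fun_sum fun i _ => (hasDerivAt_pi.1 hz i).mul (hasDerivAt_pi.1 hz i)
  refine (hsum.const_mul (1 / 2 : ℝ)).congr_deriv ?_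
  simp only [dotProduct, Finset.mul_sum]
  exact Finset.sum_congr rfl fun i _ => by ring

theorem norm_le_sqrt_dotProduct_self (z : ι → ℝ) : ‖z‖ ≤ √(z ⬝ᵥ z) :=
  (pi_norm_le_iff_of_nonneg (Real.sqrt_nonneg _)).2 fun i => Real.abs_le_sqrt <|
    (sq (z i)).symm ▸ Finset.single_le_sum (fun j _ => mul_self_nonneg (z j)) (Finset.mem_univ i)

variable {M : Matrix ι ι ℝ} {z z' : ℝ → ι → ℝ}

theorem deriv_half_dotProduct_self_neg (hM : M.PosDef) (hz : ∀ t, HasDerivAt z (z' t) t)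
    (hdiss : ∀ t, z t ⬝ᵥ z' t = -(z t ⬝ᵥ M *ᵥ z t)) {t : ℝ} (ht : z t ≠ 0) :
    deriv (fun s => (1 / 2 : ℝ) * (z s ⬝ᵥ z s)) t < 0 := by
  rw [(hz t).half_dotProduct_self.deriv, hdiss, neg_neg_iff_pos]
  exact hM.dotProduct_mulVec_pos ht

theorem tendsto_zero_of_dotProduct_deriv_eq_neg_posDef (hM : M.PosDef)
    (hz : ∀ t, HasDerivAt z (z' t) t) (hdiss : ∀ t, z t ⬝ᵥ z' t = -(z t ⬝ᵥ M *ᵥ z t)) :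
    Tendsto z atTop (𝓝 0) := by
  obtain ⟨c, hc, hcM⟩ := hM.exists_pos_mul_dotProduct_self_le
  have hV : Tendsto (fun s => (1 / 2 : ℝ) * (z s ⬝ᵥ z s)) atTop (𝓝 0) :=
    tendsto_zero_of_hasDerivAt_le_neg_mul (mul_pos two_pos hc)
      (fun t => (hz t).half_dotProduct_self)
      (fun t => by linarith [hdiss t, hcM (z t)])
      (fun t => mul_nonneg (by norm_num) (dotProduct_self_star_nonneg (z t)))
  have hdot : Tendsto (fun s => √(z s ⬝ᵥ z s)) atTop (𝓝 0) := by
    simpa using (hV.const_mul 2).sqrt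
  exact squeeze_zero_norm (fun s => norm_le_sqrt_dotProduct_self (z s)) hdot

end Lyapunov

theorem sumElim_dotProduct_sumElim_sub_mulVec_neg_mulVec {ι : Type*} [Fintype ι]
    [DecidableEq ι] (Kf Kh : Matrix ι ι ℝ) (x h : ι → ℝ) :
    Sum.elim x h ⬝ᵥ Sum.elim (h - Kf *ᵥ x) (-(Kh *ᵥ h)) =
      -(Sum.elim x h ⬝ᵥ
        (-fromBlocks (-Kf) ((1 / 2 : ℝ) • 1) ((1 / 2 : ℝ) • 1) (-Kh)) *ᵥ Sum.elim x h) := by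
  simp only [fromBlocks_neg, neg_neg, fromBlocks_mulVec, sumElim_dotProduct_sumElim,
    neg_mulVec, smul_mulVec, one_mulVec, dotProduct_add, dotProduct_sub, dotProduct_neg,
    dotProduct_smul, smul_eq_mul, Sum.elim_comp_inl, Sum.elim_comp_inr]
  rw [dotProduct_comm h x]
  ring

theorem HasDerivAt.sumElim {ι κ : Type*} [Fintype ι] [Fintype κ] {x : ℝ → ι → ℝ}
    {h : ℝ → κ → ℝ} {x' : ι → ℝ} {h' : κ → ℝ} {t : ℝ} (hx : HasDerivAt x x' t)
    (hh : HasDerivAt h h' t) :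
    HasDerivAt (fun s => Sum.elim (x s) (h s)) (Sum.elim x' h') t :=
  hasDerivAt_pi.2 fun
    | .inl i => hasDerivAt_pi.1 hx i
    | .inr i => hasDerivAt_pi.1 hh i

theorem expanded_system_GAS_general
    (m : ℕ) (Kf Kh : Matrix (Fin (2 * m)) (Fin (2 * m)) ℝ)
    (hK : (-(Matrix.fromBlocks (-Kf) ((1 / 2 : ℝ) • (1 : Matrix (Fin (2 * m)) (Fin (2 * m)) ℝ))
        ((1 / 2 : ℝ) • (1 : Matrix (Fin (2 * m)) (Fin (2 * m)) ℝ)) (-Kh))).PosDef)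
    (x h : ℝ → Fin (2 * m) → ℝ)
    (hx : ∀ t, HasDerivAt x (h t - Kf.mulVec (x t)) t)
    (hh : ∀ t, HasDerivAt h (-(Kh.mulVec (h t))) t) :
    (∀ t, 0 ≤ t → ¬(x t = 0 ∧ h t = 0) →
      deriv (fun s => (1 / 2 : ℝ) * (∑ i, (x s i) ^ 2) + (1 / 2 : ℝ) * (∑ i, (h s i) ^ 2)) t < 0) ∧
    Tendsto x atTop (nhds 0) ∧ Tendsto h atTop (nhds 0) := by
  set z : ℝ → Fin (2 * m) ⊕ Fin (2 * m) → ℝ := fun s => Sum.elim (x s) (h s)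
  have hz : ∀ t, HasDerivAt z (Sum.elim (h t - Kf *ᵥ x t) (-(Kh *ᵥ h t))) t :=
    fun t => (hx t).sumElim (hh t)
  have hdiss := fun t => sumElim_dotProduct_sumElim_sub_mulVec_neg_mulVec Kf Kh (x t) (h t)
  have hV : (fun s => (1 / 2 : ℝ) * (∑ i, (x s i) ^ 2) + (1 / 2 : ℝ) * (∑ i, (h s i) ^ 2)) =
      fun s => (1 / 2 : ℝ) * (z s ⬝ᵥ z s) := by
    ext s
    rw [sumElim_dotProduct_sumElim]
    simp only [dotProduct, sq]
    ring
  have hz0 : Tendsto z atTop (𝓝 0) := tendsto_zero_of_dotProduct_deriv_eq_neg_posDef hK hz hdiss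
  refine ⟨fun t _ hxh => ?_, ?_, ?_⟩
  · rw [hV]
    refine deriv_half_dotProduct_self_neg hK hz hdiss fun hzt => hxh ?_
    rwa [← Sum.elim_zero_zero, Sum.elim_eq_iff] at hzt
  · exact tendsto_pi_nhds.2 fun i => tendsto_pi_nhds.1 hz0 (.inl i)
  · exact tendsto_pi_nhds.2 fun i => tendsto_pi_nhds.1 hz0 (.inr i)

/-- Global asymptotic stability of the expanded herding system: under
`ẋ = h − K_f x`, `ḣ = −K_h h` with the block matrix `K` negative definite, the Lyapunov
function `V = ½‖x‖² + ½‖h‖²` is strictly decreasing whenever `(x, h) ≠ (0, 0)`, and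
`x(t), h(t) → 0` as `t → ∞`. -/
theorem expanded_system_GAS
    (m : ℕ) (Kf Kh : Matrix (Fin (2 * m)) (Fin (2 * m)) ℝ)
    (hKf : Kf.PosDef) (hKh : Kh.PosDef)
    (hK : (-(Matrix.fromBlocks (-Kf) ((1 / 2 : ℝ) • (1 : Matrix (Fin (2 * m)) (Fin (2 * m)) ℝ))
        ((1 / 2 : ℝ) • (1 : Matrix (Fin (2 * m)) (Fin (2 * m)) ℝ)) (-Kh))).PosDef)
    (x h : ℝ → Fin (2 * m) → ℝ)
    (hx : ∀ t, HasDerivAt x (h t - Kf.mulVec (x t)) t)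
    (hh : ∀ t, HasDerivAt h (-(Kh.mulVec (h t))) t) :
    (∀ t, 0 ≤ t → ¬(x t = 0 ∧ h t = 0) →
      deriv (fun s => (1 / 2 : ℝ) * (∑ i, (x s i) ^ 2) + (1 / 2 : ℝ) * (∑ i, (h s i) ^ 2)) t < 0) ∧
    Tendsto x atTop (nhds 0) ∧ Tendsto h atTop (nhds 0) :=
  expanded_system_GAS_general m Kf Kh hK x h hx hh
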